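/- arXiv:2012.13544 — 4 statements merged into one kernel-verified Lean document; each statement's English description precedes it below -/
import Mathlib

section
/- Let T > 0, n ≥ 1, p ∈ [1, ∞], M₀ ≥ 0 and M₁ > 0. Let z : ℝ → ℝⁿ be a T-periodic function (z(t+T) = z(t) for all t) which is absolutely continuous on [0,T], in the sense that there is an integrable function z' on [0,T] with z(t) = z(0) + ∫₀ᵗ z'(s) ds for all t ∈ [0,T]. Assume: (a) for every ω ∈ ℝⁿ with ‖ω‖ = 1 there exists t₀ ∈ [0,T] such that |⟨z(t₀), ω⟩| ≤ M₀; (b) ‖z'‖_{L^p(0,T)} ≤ M₁. Then for every t ∈ ℝ one has ‖z(t)‖ ≤ M₀ + T^{(p−1)/p} M₁ (with the convention T^{(p−1)/p} = T when p = ∞). -/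
open Set MeasureTheory
open scoped RealInnerProductSpace ENNReal

/-!
Moving from `z t₀` to `z t` costs at most the total variation `∫₀ᵀ ‖z'‖`, which Hölder
bounds by `T ^ (1 - 1/p) ‖z'‖_p`. Testing `z t` against its own direction
`ω = z t / ‖z t‖` and using the point `t₀` that hypothesis (a) provides for this `ω` gives
`‖z t‖ = ⟪z t₀, ω⟫ + ⟪z t - z t₀, ω⟫ ≤ M₀ + ∫₀ᵀ ‖z'‖`.
Periodicity reduces every `t` to `[0, T]`.
-/

theorem integral_norm_le_measureReal_rpow_mul_eLpNorm {α E : Type*} [MeasurableSpace α]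
    [NormedAddCommGroup E] {μ : Measure α} [IsFiniteMeasure μ] {p : ℝ≥0∞} (hp : 1 ≤ p)
    {f : α → E} (hf : MemLp f p μ) :
    ∫ x, ‖f x‖ ∂μ ≤ μ.real univ ^ (1 - 1 / p.toReal) * (eLpNorm f p μ).toReal := by
  have hexp : 0 ≤ 1 - 1 / p.toReal := by
    rcases eq_or_ne p ∞ with rfl | hp_top
    · simp
    · rw [sub_nonneg, one_div]
      exact inv_le_one_of_one_le₀ (by simpa using ENNReal.toReal_mono hp_top hp)
  have holder : eLpNorm f 1 μ ≤ eLpNorm f p μ * μ univ ^ (1 - 1 / p.toReal) := by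
    simpa using eLpNorm_le_eLpNorm_mul_rpow_measure_univ hp hf.1
  calc ∫ x, ‖f x‖ ∂μ = (eLpNorm f 1 μ).toReal := by
        rw [eLpNorm_one_eq_lintegral_enorm, integral_norm_eq_lintegral_enorm hf.1]
    _ ≤ (eLpNorm f p μ * μ univ ^ (1 - 1 / p.toReal)).toReal :=
        ENNReal.toReal_mono (ENNReal.mul_ne_top hf.2.ne
          (ENNReal.rpow_ne_top_of_nonneg hexp (measure_ne_top μ univ))) holder
    _ = μ.real univ ^ (1 - 1 / p.toReal) * (eLpNorm f p μ).toReal := by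
        rw [ENNReal.toReal_mul, ← ENNReal.toReal_rpow, measureReal_def, mul_comm]

theorem norm_sub_le_integral_norm_of_eq_add_integral {E : Type*} [NormedAddCommGroup E]
    [NormedSpace ℝ E] {a b : ℝ} {z z' : ℝ → E} (hint : IntegrableOn z' (Icc a b))
    (hAC : ∀ t ∈ Icc a b, z t = z a + ∫ s in a..t, z' s) {s t : ℝ} (hs : s ∈ Icc a b)
    (ht : t ∈ Icc a b) :
    ‖z t - z s‖ ≤ ∫ u in Icc a b, ‖z' u‖ := by
  have integrable_from_a : ∀ r ∈ Icc a b, IntervalIntegrable z' volume a r := fun r hr =>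
    (hint.mono_set (uIcc_subset_Icc (left_mem_Icc.2 (hr.1.trans hr.2)) hr)).intervalIntegrable
  have hdiff : z t - z s = ∫ u in s..t, z' u := by
    rw [hAC t ht, hAC s hs, add_sub_add_left_eq_sub, intervalIntegral.integral_interval_sub_left
      (integrable_from_a t ht) (integrable_from_a s hs)]
  rw [hdiff]
  refine intervalIntegral.norm_integral_le_integral_norm_uIoc.trans ?_
  exact setIntegral_mono_set hint.norm (Filter.Eventually.of_forall fun _ => norm_nonneg _)
    (Filter.Eventually.of_forall (uIoc_subset_uIcc.trans (uIcc_subset_Icc hs ht)))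

theorem norm_le_add_of_forall_unit_exists_inner_le {E : Type*} [NormedAddCommGroup E]
    [InnerProductSpace ℝ E] {x : E} {M D : ℝ} (hM : 0 ≤ M) (hD : 0 ≤ D)
    (h : ∀ ω : E, ‖ω‖ = 1 → ∃ y, |⟪y, ω⟫| ≤ M ∧ ‖x - y‖ ≤ D) :
    ‖x‖ ≤ M + D := by
  rcases eq_or_ne x 0 with rfl | hx
  · simpa using add_nonneg hM hD
  set ω := ‖x‖⁻¹ • x
  have hω : ‖ω‖ = 1 := norm_smul_inv_norm hx
  obtain ⟨y, hyM, hyD⟩ := h ω hω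
  have hxω : ‖x‖ = ⟪x, ω⟫ := by
    rw [real_inner_smul_right, real_inner_self_eq_norm_sq]
    field_simp [norm_ne_zero_iff.mpr hx]
  calc ‖x‖ = ⟪y, ω⟫ + ⟪x - y, ω⟫ := by rw [hxω, inner_sub_left]; ring
    _ ≤ |⟪y, ω⟫| + ‖x - y‖ * ‖ω‖ :=
        add_le_add (le_abs_self _) (real_inner_le_norm _ _)
    _ ≤ M + D := by rw [hω, mul_one]; exact add_le_add hyM hyD

theorem stmt_0_general {n : ℕ} (T : ℝ) (hT : 0 < T)
    (p : ℝ≥0∞) (hp : 1 ≤ p) (M₀ M₁ : ℝ) (hM₀ : 0 ≤ M₀) (hM₁ : 0 < M₁)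
    (z z' : ℝ → EuclideanSpace ℝ (Fin n))
    (hper : ∀ t, z (t + T) = z t)
    (hint : IntegrableOn z' (Icc 0 T))
    (hAC : ∀ t ∈ Icc (0:ℝ) T, z t = z 0 + ∫ s in (0:ℝ)..t, z' s)
    (ha : ∀ ω : EuclideanSpace ℝ (Fin n), ‖ω‖ = 1 →
      ∃ t₀ ∈ Icc (0:ℝ) T, |⟪z t₀, ω⟫| ≤ M₀)
    (hb : eLpNorm z' p (volume.restrict (Icc 0 T)) ≤ ENNReal.ofReal M₁) :
    ∀ t : ℝ, ‖z t‖ ≤ M₀ + T ^ (1 - 1 / p.toReal) * M₁ := by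
  have hL1 : ∫ s in Icc 0 T, ‖z' s‖ ≤ T ^ (1 - 1 / p.toReal) * M₁ := by
    have hz' : MemLp z' p (volume.restrict (Icc 0 T)) :=
      ⟨hint.1, hb.trans_lt ENNReal.ofReal_lt_top⟩
    refine (integral_norm_le_measureReal_rpow_mul_eLpNorm hp hz').trans ?_
    rw [measureReal_restrict_apply_univ, Real.volume_real_Icc_of_le hT.le, sub_zero]
    exact mul_le_mul_of_nonneg_left (ENNReal.toReal_le_of_le_ofReal hM₁.le hb)
      (Real.rpow_nonneg hT.le _)
  intro t
  obtain ⟨s, hs, hzs⟩ := Function.Periodic.exists_mem_Ico₀ hper hT t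
  rw [hzs]
  have hL1_nonneg := (integral_nonneg fun s => norm_nonneg (z' s)).trans hL1
  refine norm_le_add_of_forall_unit_exists_inner_le hM₀ hL1_nonneg fun ω hω => ?_
  obtain ⟨t₀, ht₀, hbound⟩ := ha ω hω
  exact ⟨z t₀, hbound, (norm_sub_le_integral_norm_of_eq_add_integral hint hAC ht₀
    (Ico_subset_Icc_self hs)).trans hL1⟩

/-- Lemma 2.1: a priori bound for periodic absolutely continuous functions. -/
theorem stmt_0 {n : ℕ} (hn : 1 ≤ n) (T : ℝ) (hT : 0 < T)
    (p : ℝ≥0∞) (hp : 1 ≤ p) (M₀ M₁ : ℝ) (hM₀ : 0 ≤ M₀) (hM₁ : 0 < M₁)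
    (z z' : ℝ → EuclideanSpace ℝ (Fin n))
    (hper : ∀ t, z (t + T) = z t)
    (hint : IntegrableOn z' (Icc 0 T))
    (hAC : ∀ t ∈ Icc (0:ℝ) T, z t = z 0 + ∫ s in (0:ℝ)..t, z' s)
    (ha : ∀ ω : EuclideanSpace ℝ (Fin n), ‖ω‖ = 1 →
      ∃ t₀ ∈ Icc (0:ℝ) T, |⟪z t₀, ω⟫| ≤ M₀)
    (hb : eLpNorm z' p (volume.restrict (Icc 0 T)) ≤ ENNReal.ofReal M₁) :
    ∀ t : ℝ, ‖z t‖ ≤ M₀ + T ^ (1 - 1 / p.toReal) * M₁ :=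
  stmt_0_general T hT p hp M₀ M₁ hM₀ hM₁ z z' hper hint hAC ha hb
end

section
/- (Tietze–Nakajima) Let S ⊆ ℝⁿ be closed, connected and locally convex, i.e. every point x ∈ S has an open neighborhood U such that S ∩ U is convex. Then S is convex. -/
/-!
The relation `[x, y] ⊆ S` holds for `y` near `x` in `S` by local convexity, so by connectedness
it suffices to show that it is transitive. Pulling back along an affine map `ℝ² → E` reduces
this to the triangle `Δ` with vertices `(0, 0)`, `(1, 0)`, `(0, 1)`: a closed locally convex
`S ⊆ ℝ²` containing the two sides of `Δ` through `(0, 1)` contains `Δ`. Otherwise let `m` be the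
highest level reached by the closure of the hole `Δ \ S` and `q` its leftmost point on that
level. All of `Δ` on or above level `m` lies in `S`, and every point of `Δ` near `q` is the
midpoint of two points of `S` near `q`: one on level `m`, the other on a side of `Δ` or just to
the left of `q`, where no hole accumulates. Convexity of `S` near `q` then forbids hole points
near `q`.
-/

open Set Filter Topology Metric

def IsLocallyConvexSet {E : Type*} [TopologicalSpace E] [AddCommGroup E] [Module ℝ E]
    (S : Set E) : Prop :=
  ∀ x ∈ S, ∃ U : Set E, IsOpen U ∧ x ∈ U ∧ Convex ℝ (S ∩ U)

theorem mem_closure_sdiff_iff {X : Type*} [TopologicalSpace X] {A S : Set X} {p : X} :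
    p ∈ closure (A \ S) ↔ ¬ ∀ᶠ z in 𝓝 p, z ∈ A → z ∈ S := by
  simp only [mem_closure_iff_frequently, Filter.Frequently, Set.mem_sdiff, not_and, not_not]

theorem IsCompact.exists_snd_max_fst_min {K : Set (ℝ × ℝ)} (hK : IsCompact K)
    (hne : K.Nonempty) :
    ∃ q ∈ K, (∀ p ∈ K, p.2 ≤ q.2) ∧ ∀ p ∈ K, p.2 = q.2 → q.1 ≤ p.1 := by
  obtain ⟨q₀, hq₀, hmax⟩ := hK.exists_isMaxOn hne continuous_snd.continuousOn
  obtain ⟨q, ⟨hq, hqm⟩, hmin⟩ :=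
    (hK.inter_right (isClosed_eq continuous_snd continuous_const)).exists_isMinOn
      ⟨q₀, hq₀, rfl⟩ continuous_fst.continuousOn
  exact ⟨q, hq, fun p hp => hqm ▸ hmax hp, fun p hp hpq => hmin ⟨hp, hpq.trans hqm⟩⟩

namespace IsLocallyConvexSet

section TopologicalVectorSpace

variable {E : Type*} [TopologicalSpace E] [AddCommGroup E] [Module ℝ E] {S : Set E}

theorem preimage {F : Type*} [TopologicalSpace F] [AddCommGroup F] [Module ℝ F]
    (hS : IsLocallyConvexSet S) (f : F →ᵃ[ℝ] E) (hf : Continuous f) :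
    IsLocallyConvexSet (f ⁻¹' S) := fun x hx => by
  obtain ⟨U, hU, hxU, hconv⟩ := hS (f x) hx
  exact ⟨f ⁻¹' U, hU.preimage hf, hxU, hconv.affine_preimage f⟩

theorem eventually_segment_subset (hS : IsLocallyConvexSet S) {x : E} (hx : x ∈ S) :
    ∀ᶠ y in 𝓝[S] x, segment ℝ x y ⊆ S := by
  obtain ⟨U, hU, hxU, hconv⟩ := hS x hx
  filter_upwards [inter_mem_nhdsWithin S (hU.mem_nhds hxU)] with y hy
  exact (hconv.segment_subset ⟨hx, hxU⟩ hy).trans inter_subset_left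

end TopologicalVectorSpace

section NormedSpace

variable {E : Type*} [NormedAddCommGroup E] [NormedSpace ℝ E] {S : Set E}

theorem exists_convex_inter_ball (hS : IsLocallyConvexSet S) {x : E} (hx : x ∈ S) :
    ∃ r > 0, Convex ℝ (S ∩ ball x r) := by
  obtain ⟨U, hU, hxU, hconv⟩ := hS x hx
  obtain ⟨r, hr, hball⟩ := Metric.isOpen_iff.1 hU x hxU
  refine ⟨r, hr, ?_⟩
  rw [← inter_eq_right.2 hball, ← inter_assoc]
  exact hconv.inter (convex_ball x r)

/-- `z` is the midpoint of `v z` and of its reflection `2 z - v z` through `z`. -/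
theorem exists_eventually_mem_of_reflection (hS : IsLocallyConvexSet S) {q : E} (hq : q ∈ S) :
    ∃ r > 0, ∀ v : E → E, Continuous v → dist (v q) q < r → dist ((2 : ℝ) • q - v q) q < r →
      ∀ {P : E → Prop}, (∀ᶠ z in 𝓝 q, P z → v z ∈ S ∧ (2 : ℝ) • z - v z ∈ S) →
        ∀ᶠ z in 𝓝 q, P z → z ∈ S := by
  obtain ⟨r, hr, hconv⟩ := hS.exists_convex_inter_ball hq
  refine ⟨r, hr, fun v hv hvq huq P hP => ?_⟩
  have hv' : ∀ᶠ z in 𝓝 q, dist (v z) q < r :=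
    ContinuousAt.eventually_lt (by fun_prop) continuousAt_const hvq
  have hu' : ∀ᶠ z in 𝓝 q, dist ((2 : ℝ) • z - v z) q < r :=
    ContinuousAt.eventually_lt (by fun_prop) continuousAt_const huq
  filter_upwards [hP, hv', hu'] with z hPz hvz huz hz
  obtain ⟨hvS, huS⟩ := hPz hz
  have hmid := hconv ⟨hvS, hvz⟩ ⟨huS, huz⟩ (by norm_num : (0 : ℝ) ≤ 1 / 2)
    (by norm_num : (0 : ℝ) ≤ 1 / 2) (by norm_num)
  convert hmid.1 using 1
  module

theorem eventually_mem_of_reflection (hS : IsLocallyConvexSet S) {q : E} (hq : q ∈ S)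
    {v : E → E} (hv : Continuous v) (hvq : v q = q) {P : E → Prop}
    (hP : ∀ᶠ z in 𝓝 q, P z → v z ∈ S ∧ (2 : ℝ) • z - v z ∈ S) :
    ∀ᶠ z in 𝓝 q, P z → z ∈ S := by
  obtain ⟨r, hr, hmid⟩ := hS.exists_eventually_mem_of_reflection hq
  exact hmid v hv (by simpa [hvq] using hr) (by simpa [hvq, two_smul] using hr) hP

end NormedSpace

end IsLocallyConvexSet

def stdTriangle : Set (ℝ × ℝ) := {p | 0 ≤ p.1 ∧ 0 ≤ p.2 ∧ p.1 + p.2 ≤ 1}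

theorem convex_stdTriangle : Convex ℝ stdTriangle := by
  rintro p ⟨hp₁, hp₂, hp⟩ q ⟨hq₁, hq₂, hq⟩ a b ha hb hab
  refine ⟨by simp only [Prod.fst_add, Prod.smul_fst, smul_eq_mul]; positivity,
    by simp only [Prod.snd_add, Prod.smul_snd, smul_eq_mul]; positivity, ?_⟩
  simp only [Prod.fst_add, Prod.snd_add, Prod.smul_fst, Prod.smul_snd, smul_eq_mul]
  nlinarith

theorem isCompact_stdTriangle : IsCompact stdTriangle := by
  have hsub : stdTriangle ⊆ Icc (0 : ℝ) 1 ×ˢ Icc (0 : ℝ) 1 := fun p ⟨h₁, h₂, h⟩ =>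
    ⟨⟨h₁, by linarith⟩, ⟨h₂, by linarith⟩⟩
  refine (isCompact_Icc.prod isCompact_Icc).of_isClosed_subset ?_ hsub
  exact (isClosed_le continuous_const continuous_fst).inter
    ((isClosed_le continuous_const continuous_snd).inter
      (isClosed_le (continuous_fst.add continuous_snd) continuous_const))

section StdTriangle

variable {S : Set (ℝ × ℝ)}

theorem stdTriangle_inter_le_snd_subset (hS : IsClosed S) {m : ℝ} (hm : m < 1)
    (habove : ∀ p ∈ stdTriangle, m < p.2 → p ∈ S) :
    ∀ p ∈ stdTriangle, m ≤ p.2 → p ∈ S := by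
  intro p hp hmp
  have hc : ((0 : ℝ), (1 : ℝ)) ∈ stdTriangle := by norm_num [stdTriangle]
  refine hS.closure_subset_iff.2 ?_
    (segment_subset_closure_openSegment (left_mem_segment ℝ p ((0 : ℝ), (1 : ℝ))))
  rintro z ⟨a, b, ha, hb, hab, rfl⟩
  refine habove _ (convex_stdTriangle.openSegment_subset hp hc ⟨a, b, ha, hb, hab, rfl⟩) ?_
  simp only [Prod.snd_add, Prod.smul_snd, smul_eq_mul]
  nlinarith

theorem eventually_mem_near_apex (hSloc : IsLocallyConvexSet S)
    (hleft : ∀ t ∈ Icc (0 : ℝ) 1, ((0 : ℝ), t) ∈ S)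
    (hhyp : ∀ t ∈ Icc (0 : ℝ) 1, (t, 1 - t) ∈ S) :
    ∀ᶠ z in 𝓝 ((0 : ℝ), (1 : ℝ)), z ∈ stdTriangle → z ∈ S := by
  refine hSloc.eventually_mem_of_reflection (hleft 1 (by norm_num))
    (v := fun z => ((0 : ℝ), 2 * z.1 + 2 * z.2 - 1)) (by fun_prop) (by norm_num) ?_
  have h₁ : ∀ᶠ z : ℝ × ℝ in 𝓝 (0, 1), 0 < 2 * z.1 + 2 * z.2 - 1 :=
    ContinuousAt.eventually_lt continuousAt_const (by fun_prop) (by norm_num)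
  have h₂ : ∀ᶠ z : ℝ × ℝ in 𝓝 (0, 1), 2 * z.1 < 1 :=
    ContinuousAt.eventually_lt (by fun_prop) continuousAt_const (by norm_num)
  filter_upwards [h₁, h₂] with z h₁ h₂ ⟨hz₁, hz₂, hz⟩
  refine ⟨hleft _ ⟨h₁.le, by linarith⟩, ?_⟩
  convert hhyp (2 * z.1) ⟨by linarith, h₂.le⟩ using 1
  ext <;> simp
  ring

theorem eventually_mem_near_left (hSloc : IsLocallyConvexSet S)
    (hleft : ∀ t ∈ Icc (0 : ℝ) 1, ((0 : ℝ), t) ∈ S) {m : ℝ}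
    (hSm : ∀ p ∈ stdTriangle, m ≤ p.2 → p ∈ S) (hm₀ : 0 < m) (hm₁ : m < 1) :
    ∀ᶠ z in 𝓝 ((0 : ℝ), m), z ∈ stdTriangle → z ∈ S := by
  refine hSloc.eventually_mem_of_reflection (hleft m ⟨hm₀.le, hm₁.le⟩)
    (v := fun z => ((0 : ℝ), 2 * z.2 - m)) (by fun_prop) (Prod.ext rfl (by simp; ring)) ?_
  have h₁ : ∀ᶠ z : ℝ × ℝ in 𝓝 (0, m), 0 < 2 * z.2 - m :=
    ContinuousAt.eventually_lt continuousAt_const (by fun_prop) (by norm_num [hm₀])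
  have h₂ : ∀ᶠ z : ℝ × ℝ in 𝓝 (0, m), 2 * z.2 - m < 1 :=
    ContinuousAt.eventually_lt (by fun_prop) continuousAt_const (by norm_num; linarith)
  have h₃ : ∀ᶠ z : ℝ × ℝ in 𝓝 (0, m), 2 * z.1 + m < 1 :=
    ContinuousAt.eventually_lt (by fun_prop) continuousAt_const (by norm_num [hm₁])
  filter_upwards [h₁, h₂, h₃] with z h₁ h₂ h₃ ⟨hz₁, hz₂, hz⟩
  refine ⟨hleft _ ⟨h₁.le, h₂.le⟩, ?_⟩
  convert hSm (2 * z.1, m) ⟨by linarith, hm₀.le, h₃.le⟩ le_rfl using 1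
  ext <;> simp

theorem eventually_mem_near_hypotenuse (hSloc : IsLocallyConvexSet S)
    (hhyp : ∀ t ∈ Icc (0 : ℝ) 1, (t, 1 - t) ∈ S) {m : ℝ}
    (hSm : ∀ p ∈ stdTriangle, m ≤ p.2 → p ∈ S) (hm₀ : 0 < m) (hm₁ : m < 1) :
    ∀ᶠ z in 𝓝 (1 - m, m), z ∈ stdTriangle → z ∈ S := by
  refine hSloc.eventually_mem_of_reflection
    (hSm (1 - m, m) ⟨by linarith, hm₀.le, by linarith⟩ le_rfl)
    (v := fun z => (1 + m - 2 * z.2, 2 * z.2 - m)) (by fun_prop)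
    (Prod.ext (by simp; ring) (by simp; ring)) ?_
  have h₁ : ∀ᶠ z : ℝ × ℝ in 𝓝 (1 - m, m), 0 < 1 + m - 2 * z.2 :=
    ContinuousAt.eventually_lt continuousAt_const (by fun_prop) (by norm_num; linarith)
  have h₂ : ∀ᶠ z : ℝ × ℝ in 𝓝 (1 - m, m), 1 + m - 2 * z.2 < 1 :=
    ContinuousAt.eventually_lt (by fun_prop) continuousAt_const (by norm_num; linarith)
  have h₃ : ∀ᶠ z : ℝ × ℝ in 𝓝 (1 - m, m), 0 < 2 * z.1 + 2 * z.2 - 1 - m :=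
    ContinuousAt.eventually_lt continuousAt_const (by fun_prop) (by norm_num; linarith)
  filter_upwards [h₁, h₂, h₃] with z h₁ h₂ h₃ ⟨hz₁, hz₂, hz⟩
  constructor
  · convert hhyp _ ⟨h₁.le, h₂.le⟩ using 2
    ring
  · convert hSm (2 * z.1 + 2 * z.2 - 1 - m, m) ⟨h₃.le, hm₀.le, by linarith⟩ le_rfl using 1
    ext <;> simp
    ring

theorem eventually_mem_near_interior (hSloc : IsLocallyConvexSet S) {x m : ℝ}
    (hSm : ∀ p ∈ stdTriangle, m ≤ p.2 → p ∈ S) (hm₀ : 0 < m) (hx₀ : 0 < x) (hx₁ : x + m < 1)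
    (hleftward : ∀ x' < x, ∀ᶠ z in 𝓝 (x', m), z ∈ stdTriangle → z ∈ S) :
    ∀ᶠ z in 𝓝 (x, m), z ∈ stdTriangle → z ∈ S := by
  obtain ⟨r, hr, hmid⟩ := hSloc.exists_eventually_mem_of_reflection
    (hSm (x, m) ⟨hx₀.le, hm₀.le, hx₁.le⟩ le_rfl)
  obtain ⟨ρ, hρ₀, hρ⟩ := exists_between (lt_min (lt_min hx₀ (sub_pos.2 hx₁)) hr)
  simp only [lt_min_iff] at hρ
  obtain ⟨⟨hρx, hρm⟩, hρr⟩ := hρ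
  refine hmid (fun z => (x - ρ, 2 * z.2 - m)) (by fun_prop) ?_ ?_ ?_
  · norm_num [Prod.dist_eq, Real.dist_eq, two_mul, abs_of_pos hρ₀, hρr, hr]
  · norm_num [Prod.dist_eq, Real.dist_eq, two_mul, abs_of_pos hρ₀, hρr, hr]
  have hv : ∀ᶠ z in 𝓝 (x, m), (x - ρ, 2 * z.2 - m) ∈ stdTriangle → (x - ρ, 2 * z.2 - m) ∈ S :=
    ((by fun_prop : Continuous fun z : ℝ × ℝ => (x - ρ, 2 * z.2 - m)).tendsto' (x, m) (x - ρ, m)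
      (by simp; ring)).eventually (hleftward _ (by linarith))
  have h₁ : ∀ᶠ z : ℝ × ℝ in 𝓝 (x, m), 0 < 2 * z.2 - m :=
    ContinuousAt.eventually_lt continuousAt_const (by fun_prop) (by norm_num [hm₀])
  have h₂ : ∀ᶠ z : ℝ × ℝ in 𝓝 (x, m), x - ρ + (2 * z.2 - m) < 1 :=
    ContinuousAt.eventually_lt (by fun_prop) continuousAt_const (by norm_num; linarith)
  have h₃ : ∀ᶠ z : ℝ × ℝ in 𝓝 (x, m), 0 < 2 * z.1 - x + ρ :=
    ContinuousAt.eventually_lt continuousAt_const (by fun_prop) (by norm_num; linarith)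
  have h₄ : ∀ᶠ z : ℝ × ℝ in 𝓝 (x, m), 2 * z.1 - x + ρ + m < 1 :=
    ContinuousAt.eventually_lt (by fun_prop) continuousAt_const (by norm_num; linarith)
  filter_upwards [hv, h₁, h₂, h₃, h₄] with z hv h₁ h₂ h₃ h₄ _
  refine ⟨hv ⟨by linarith, h₁.le, h₂.le⟩, ?_⟩
  convert hSm (2 * z.1 - x + ρ, m) ⟨h₃.le, hm₀.le, h₄.le⟩ le_rfl using 1
  ext <;> simp
  ring

theorem stdTriangle_subset (hS : IsClosed S) (hSloc : IsLocallyConvexSet S)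
    (hleft : ∀ t ∈ Icc (0 : ℝ) 1, ((0 : ℝ), t) ∈ S)
    (hhyp : ∀ t ∈ Icc (0 : ℝ) 1, (t, 1 - t) ∈ S) :
    stdTriangle ⊆ S := by
  by_contra hsub
  obtain ⟨p, hp⟩ := sdiff_nonempty.2 hsub
  have hKΔ : closure (stdTriangle \ S) ⊆ stdTriangle :=
    closure_minimal sdiff_subset isCompact_stdTriangle.isClosed
  obtain ⟨⟨x, m⟩, hqK, hmax, hmin⟩ :=
    (isCompact_stdTriangle.closure_of_subset sdiff_subset).exists_snd_max_fst_min
      ⟨p, subset_closure hp⟩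
  obtain ⟨hx₀, -, hxm⟩ := hKΔ hqK
  have hm₁ : m < 1 := by
    refine lt_of_le_of_ne (by linarith) fun hm => mem_closure_sdiff_iff.1 hqK ?_
    obtain rfl : x = 0 := by linarith
    exact hm ▸ eventually_mem_near_apex hSloc hleft hhyp
  have hSm : ∀ p ∈ stdTriangle, m ≤ p.2 → p ∈ S :=
    stdTriangle_inter_le_snd_subset hS hm₁ fun p hp hmp =>
      by_contra fun hpS => (hmax p (subset_closure ⟨hp, hpS⟩)).not_gt hmp
  have hm₀ : 0 < m := hp.1.2.1.trans_lt <| (hmax p (subset_closure hp)).lt_of_ne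
    fun hpm => hp.2 (hSm p hp.1 hpm.ge)
  refine mem_closure_sdiff_iff.1 hqK ?_
  rcases hx₀.eq_or_lt with rfl | hx₀
  · exact eventually_mem_near_left hSloc hleft hSm hm₀ hm₁
  rcases hxm.eq_or_lt with hxm | hxm
  · obtain rfl : x = 1 - m := by linarith
    exact eventually_mem_near_hypotenuse hSloc hhyp hSm hm₀ hm₁
  refine eventually_mem_near_interior hSloc hSm hm₀ hx₀ hxm fun x' hx' => ?_
  exact not_not.1 fun h => (hmin (x', m) (mem_closure_sdiff_iff.2 h) rfl).not_gt hx'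

end StdTriangle

namespace IsLocallyConvexSet

variable {E : Type*} [TopologicalSpace E] [AddCommGroup E] [Module ℝ E]
  [IsTopologicalAddGroup E] [ContinuousSMul ℝ E] {S : Set E}

theorem segment_subset_trans (hS : IsLocallyConvexSet S) (hclosed : IsClosed S) {a b c : E}
    (hac : segment ℝ a c ⊆ S) (hcb : segment ℝ c b ⊆ S) : segment ℝ a b ⊆ S := by
  let ψ : ℝ × ℝ →ᵃ[ℝ] E :=
    { toFun := fun p => a + p.1 • (b - a) + p.2 • (c - a)
      linear := (LinearMap.fst ℝ ℝ ℝ).smulRight (b - a) + (LinearMap.snd ℝ ℝ ℝ).smulRight (c - a)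
      map_vadd' := fun p v => by
        simp only [vadd_eq_add, LinearMap.add_apply, LinearMap.smulRight_apply,
          LinearMap.fst_apply, LinearMap.snd_apply, Prod.fst_add, Prod.snd_add]
        module }
  have hψ : Continuous ψ := by
    change Continuous fun p : ℝ × ℝ => a + p.1 • (b - a) + p.2 • (c - a)
    fun_prop
  have hΔ := stdTriangle_subset (hclosed.preimage hψ) (hS.preimage ψ hψ)
    (fun t ht => hac ⟨1 - t, t, by linarith [ht.2], ht.1, by ring, by simp [ψ]; module⟩)
    (fun t ht => hcb ⟨1 - t, t, by linarith [ht.2], ht.1, by ring, by simp [ψ]; module⟩)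
  rintro _ ⟨s, t, hs, ht, hst, rfl⟩
  obtain rfl : s = 1 - t := by linarith
  have hψt : ψ (t, 0) ∈ S := hΔ ⟨ht, le_rfl, by linarith⟩
  convert hψt using 1
  simp [ψ]
  module

theorem convex (hS : IsLocallyConvexSet S) (hclosed : IsClosed S) (hconn : IsPreconnected S) :
    Convex ℝ S :=
  convex_iff_segment_subset.2 fun _ hx _ hy =>
    hconn.induction₂ (fun x y => segment ℝ x y ⊆ S) (fun _ hx => hS.eventually_segment_subset hx)
      (fun _ _ _ _ _ _ => hS.segment_subset_trans hclosed)
      (fun x y _ _ hxy => segment_symm ℝ x y ▸ hxy) hx hy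

end IsLocallyConvexSet

/-- Tietze--Nakajima theorem: a closed, connected, locally convex subset of a
Euclidean space is convex. -/
theorem stmt_3 {n : ℕ} (S : Set (EuclideanSpace ℝ (Fin n)))
    (hclosed : IsClosed S) (hconn : IsConnected S)
    (hloc : ∀ x ∈ S, ∃ U : Set (EuclideanSpace ℝ (Fin n)),
      IsOpen U ∧ x ∈ U ∧ Convex ℝ (S ∩ U)) :
    Convex ℝ S :=
  IsLocallyConvexSet.convex hloc hclosed hconn.isPreconnected
end

section
/- Let φ : ℝ → ℝ be an increasing homeomorphism onto ℝ with φ(0) = 0, and let γ > 0 be such that ∫₁^∞ φ⁻¹(ξ) ξ^{−(1+γ)/γ} dξ < ∞. Define x(t) = ∫₀ᵗ φ⁻¹((1−s)^{−γ}) ds for t ∈ [0,1). Then: (a) x'(t) = φ⁻¹((1−t)^{−γ}) for all t ∈ [0,1), and the map t ↦ φ(x'(t)) = (1−t)^{−γ} is differentiable on (0,1) with (φ(x'))'(t) = γ (φ(x'(t)))^{(1+γ)/γ}; (b) x is bounded on [0,1); (c) x'(t) → +∞ as t → 1⁻. -/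
open Set Filter MeasureTheory
open scoped Topology

/-!
Since `φ (ψ y) = y`, the function `φ ∘ x'` is `(1 - t) ^ (-γ)` itself, whose derivative is
`γ (1 - t) ^ (-γ - 1) = γ ((1 - t) ^ (-γ)) ^ ((1 + γ) / γ)`. The substitution `ξ = (1 - s) ^ (-γ)`
turns `x t` into `γ⁻¹ ∫₁^{(1-t)^{-γ}} ψ ξ ξ^{-(1+γ)/γ} dξ`, which is bounded by the integrability
hypothesis. Finally `ψ` is the inverse of an order isomorphism of `ℝ`, so it is continuous and
tends to `+∞`, as does `(1 - t) ^ (-γ)` when `t → 1⁻`.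
-/

theorem hasDerivAt_intervalIntegral_of_continuousOn {E : Type*} [NormedAddCommGroup E]
    [NormedSpace ℝ E] [CompleteSpace E] {f : ℝ → E} {U : Set ℝ} {a b : ℝ}
    (hU : IsOpen U) [U.OrdConnected] (hf : ContinuousOn f U) (ha : a ∈ U) (hb : b ∈ U) :
    HasDerivAt (fun x => ∫ t in a..x, f t) (f b) b :=
  intervalIntegral.integral_hasDerivAt_right
    ((hf.mono (Set.OrdConnected.uIcc_subset ‹_› ha hb)).intervalIntegrable)
    (hf.stronglyMeasurableAtFilter hU b hb) (hf.continuousAt (hU.mem_nhds hb))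

theorem abs_intervalIntegral_le_integral_abs_Ici {g : ℝ → ℝ} {a b : ℝ}
    (hg : IntegrableOn g (Ici a)) (hab : a ≤ b) :
    |∫ x in a..b, g x| ≤ ∫ x in Ici a, |g x| :=
  calc |∫ x in a..b, g x| ≤ ∫ x in a..b, |g x| := intervalIntegral.abs_integral_le_integral_abs hab
    _ = ∫ x in Ioc a b, |g x| := intervalIntegral.integral_of_le hab
    _ ≤ ∫ x in Ici a, |g x| :=
      setIntegral_mono_set hg.abs (ae_of_all _ fun _ => abs_nonneg _)
        (Ioc_subset_Ioi_self.trans Ioi_subset_Ici_self).eventuallyLE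

theorem hasDerivAt_one_sub_rpow {s : ℝ} (hs : s < 1) (p : ℝ) :
    HasDerivAt (fun s : ℝ => (1 - s) ^ p) (-p * (1 - s) ^ (p - 1)) s := by
  simpa using ((hasDerivAt_id s).const_sub 1).rpow_const (p := p) (Or.inl (sub_ne_zero.2 hs.ne'))

theorem rpow_neg_rpow_one_add_div {x γ : ℝ} (hx : 0 ≤ x) (hγ : γ ≠ 0) :
    (x ^ (-γ)) ^ ((1 + γ) / γ) = x ^ (-γ - 1) := by
  rw [← Real.rpow_mul hx]
  congr 1
  field_simp
  ring

theorem tendsto_one_sub_rpow_neg_nhdsLT_one {γ : ℝ} (hγ : 0 < γ) :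
    Tendsto (fun t : ℝ => (1 - t) ^ (-γ)) (𝓝[<] 1) atTop := by
  have h : Tendsto (fun t : ℝ => 1 - t) (𝓝[<] 1) (𝓝[>] 0) := by
    simpa using (continuous_sub_left (1 : ℝ)).continuousWithinAt.tendsto_nhdsWithin
      (x := 1) (fun t (ht : t ∈ Iio 1) => show 1 - t ∈ Ioi 0 from sub_pos.2 ht)
  exact (tendsto_rpow_neg_nhdsGT_zero (neg_neg_of_pos hγ)).comp h

theorem integral_comp_one_sub_rpow_neg {f : ℝ → ℝ} (hf : Continuous f) {γ t : ℝ} (hγ : γ ≠ 0)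
    (ht : t < 1) :
    ∫ s in (0:ℝ)..t, f ((1 - s) ^ (-γ))
      = (∫ ξ in (1:ℝ)..(1 - t) ^ (-γ), f ξ * ξ ^ (-(1 + γ) / γ)) / γ := by
  have hlt : ∀ s ∈ uIcc (0:ℝ) t, 0 < 1 - s := fun s hs =>
    sub_pos.2 (ordConnected_Iio.uIcc_subset zero_lt_one ht hs)
  have hderiv : ∀ s ∈ uIcc (0:ℝ) t,
      HasDerivAt (fun s : ℝ => (1 - s) ^ (-γ)) (γ * (1 - s) ^ (-γ - 1)) s := fun s hs => by
    simpa using hasDerivAt_one_sub_rpow (sub_pos.1 (hlt s hs)) (-γ)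
  have hcont_deriv : ContinuousOn (fun s : ℝ => γ * (1 - s) ^ (-γ - 1)) (uIcc 0 t) :=
    fun s hs => by
      have := (hlt s hs).ne'
      exact ContinuousAt.continuousWithinAt (by fun_prop (disch := exact Or.inl ‹_›))
  have hcont_g : ContinuousOn (fun ξ : ℝ => f ξ * ξ ^ (-(1 + γ) / γ) / γ) (Ioi 0) :=
    fun ξ hξ => by
      have : ξ ≠ 0 := (mem_Ioi.1 hξ).ne'
      exact ContinuousAt.continuousWithinAt (by fun_prop (disch := exact Or.inl ‹_›))
  have hsubst := intervalIntegral.integral_comp_mul_deriv' hderiv hcont_deriv (hcont_g.mono ?_)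
  · rw [sub_zero, Real.one_rpow] at hsubst
    rw [← intervalIntegral.integral_div, ← hsubst]
    refine intervalIntegral.integral_congr fun s hs => ?_
    have hpos : 0 < (1 - s) ^ (-γ) := Real.rpow_pos_of_pos (hlt s hs) _
    have := (Real.rpow_pos_of_pos (hlt s hs) (-γ - 1)).ne'
    simp only [Function.comp_apply, neg_div, Real.rpow_neg hpos.le,
      rpow_neg_rpow_one_add_div (hlt s hs).le hγ]
    field_simp
  · rintro _ ⟨s, hs, rfl⟩
    exact Real.rpow_pos_of_pos (hlt s hs) _

theorem stmt_13_general (φ ψ : ℝ → ℝ) (hmono : StrictMono φ)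
    (hψr : Function.RightInverse ψ φ)
    (γ : ℝ) (hγ : 0 < γ)
    (hint : MeasureTheory.IntegrableOn
      (fun ξ : ℝ => ψ ξ * ξ ^ (-(1 + γ) / γ)) (Ici (1:ℝ))) :
    (∀ t ∈ Ico (0:ℝ) 1,
      HasDerivWithinAt (fun τ => ∫ s in (0:ℝ)..τ, ψ ((1 - s) ^ (-γ)))
        (ψ ((1 - t) ^ (-γ))) (Ico (0:ℝ) 1) t) ∧
    (∀ t ∈ Ico (0:ℝ) 1, φ (ψ ((1 - t) ^ (-γ))) = (1 - t) ^ (-γ)) ∧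
    (∀ t ∈ Ioo (0:ℝ) 1,
      HasDerivAt (fun s => φ (ψ ((1 - s) ^ (-γ))))
        (γ * (φ (ψ ((1 - t) ^ (-γ)))) ^ ((1 + γ) / γ)) t) ∧
    (∃ C : ℝ, ∀ t ∈ Ico (0:ℝ) 1, |∫ s in (0:ℝ)..t, ψ ((1 - s) ^ (-γ))| ≤ C) ∧
    Tendsto (fun t => ψ ((1 - t) ^ (-γ))) (𝓝[<] (1:ℝ)) atTop := by
  set e : ℝ ≃o ℝ := hmono.orderIsoOfRightInverse φ ψ hψr
  have hψ : Continuous ψ := e.symm.continuous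
  have hx' : ContinuousOn (fun s => ψ ((1 - s) ^ (-γ))) (Iio 1) := fun s hs => by
    have : 1 - s ≠ 0 := (sub_pos.2 hs).ne'
    exact ContinuousAt.continuousWithinAt (by fun_prop (disch := exact Or.inl ‹_›))
  refine ⟨fun t ht => ?_, fun t _ => hψr _, fun t ht => ?_,
    ⟨(∫ ξ in Ici 1, |ψ ξ * ξ ^ (-(1 + γ) / γ)|) / γ, fun t ht => ?_⟩,
    e.symm.tendsto_atTop.comp (tendsto_one_sub_rpow_neg_nhdsLT_one hγ)⟩
  · exact (hasDerivAt_intervalIntegral_of_continuousOn isOpen_Iio hx' (by norm_num)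
      ht.2).hasDerivWithinAt
  · simp only [hψr _]
    rw [rpow_neg_rpow_one_add_div (sub_pos.2 ht.2).le hγ.ne']
    simpa using hasDerivAt_one_sub_rpow ht.2 (-γ)
  · rw [integral_comp_one_sub_rpow_neg hψ hγ.ne' ht.2, abs_div, abs_of_pos hγ]
    gcongr
    exact abs_intervalIntegral_le_integral_abs_Ici hint
      (Real.one_le_rpow_of_pos_of_le_one_of_nonpos (by linarith [ht.2]) (by linarith [ht.1])
        (by linarith))

/-- Example 2.1: for a scalar increasing homeomorphism `φ` with a power-type growth
condition, the equation `(φ(x'))' = γ (φ(x'))^{(1+γ)/γ}` admits a bounded solution on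
`[0,1)` with unbounded derivative. -/
theorem stmt_13 (φ ψ : ℝ → ℝ) (hmono : StrictMono φ) (hcont : Continuous φ)
    (hsurj : Function.Surjective φ) (hφ0 : φ 0 = 0)
    (hψl : Function.LeftInverse ψ φ) (hψr : Function.RightInverse ψ φ)
    (γ : ℝ) (hγ : 0 < γ)
    (hint : MeasureTheory.IntegrableOn
      (fun ξ : ℝ => ψ ξ * ξ ^ (-(1 + γ) / γ)) (Ici (1:ℝ))) :
    (∀ t ∈ Ico (0:ℝ) 1,
      HasDerivWithinAt (fun τ => ∫ s in (0:ℝ)..τ, ψ ((1 - s) ^ (-γ)))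
        (ψ ((1 - t) ^ (-γ))) (Ico (0:ℝ) 1) t) ∧
    (∀ t ∈ Ico (0:ℝ) 1, φ (ψ ((1 - t) ^ (-γ))) = (1 - t) ^ (-γ)) ∧
    (∀ t ∈ Ioo (0:ℝ) 1,
      HasDerivAt (fun s => φ (ψ ((1 - s) ^ (-γ))))
        (γ * (φ (ψ ((1 - t) ^ (-γ)))) ^ ((1 + γ) / γ)) t) ∧
    (∃ C : ℝ, ∀ t ∈ Ico (0:ℝ) 1, |∫ s in (0:ℝ)..t, ψ ((1 - s) ^ (-γ))| ≤ C) ∧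
    Tendsto (fun t => ψ ((1 - t) ^ (-γ))) (𝓝[<] (1:ℝ)) atTop :=
  stmt_13_general φ ψ hmono hψr γ hγ hint
end

section
/- Let φ : ℝⁿ → ℝⁿ be a homeomorphism onto ℝⁿ with φ(0) = 0 such that φ(ξ) = A(ξ)·ξ for all ξ ≠ 0, where A : ℝⁿ∖{0} → (0,∞) is continuous. Then ⟨φ(ξ), ξ⟩ > 0 for every ξ ≠ 0, and for every η > 0 there exists M_η > 0 such that ⟨φ(ξ), ξ⟩ ≥ η‖ξ‖ − M_η for all ξ ∈ ℝⁿ. -/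
/-!
Since `φ ξ` is a nonnegative multiple of `ξ`, the two vectors lie on a common ray, so
`⟪φ ξ, ξ⟫ = ‖φ ξ‖ ‖ξ‖`. Injectivity and `φ 0 = 0` make this positive for `ξ ≠ 0`. A
homeomorphism of `ℝⁿ` is proper, so `‖φ ξ‖ ≥ η` once `‖ξ‖` is large, which gives
`⟪φ ξ, ξ⟫ ≥ η ‖ξ‖` there; on the remaining ball `η ‖ξ‖` is bounded.
-/

open Set Filter Bornology
open scoped RealInnerProductSpace

theorem real_inner_smul_self_left_eq_norm_mul_norm {E : Type*} [SeminormedAddCommGroup E]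
    [InnerProductSpace ℝ E] (x : E) {r : ℝ} (hr : 0 ≤ r) :
    ⟪r • x, x⟫ = ‖r • x‖ * ‖x‖ := by
  rw [real_inner_smul_self_left, norm_smul, Real.norm_of_nonneg hr, mul_assoc]

theorem Topology.IsClosedEmbedding.tendsto_cobounded {X Y : Type*} [PseudoMetricSpace X]
    [PseudoMetricSpace Y] [ProperSpace X] [ProperSpace Y] {f : X → Y}
    (hf : Topology.IsClosedEmbedding f) : Tendsto f (cobounded X) (cobounded Y) := by
  simpa only [Metric.cobounded_eq_cocompact] using hf.tendsto_cocompact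

theorem exists_pos_mul_norm_sub_le_norm_mul_norm {E F : Type*} [SeminormedAddCommGroup E]
    [SeminormedAddCommGroup F] {φ : E → F} (hφ : Tendsto φ (cobounded E) (cobounded F))
    {η : ℝ} (hη : 0 ≤ η) : ∃ M, 0 < M ∧ ∀ ξ, η * ‖ξ‖ - M ≤ ‖φ ξ‖ * ‖ξ‖ := by
  obtain ⟨R, -, hR⟩ := hasBasis_cobounded_norm.eventually_iff.mp <|
    (tendsto_norm_atTop_iff_cobounded.mpr hφ).eventually_ge_atTop η
  refine ⟨η * max R 0 + 1, by positivity, fun ξ => ?_⟩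
  rcases le_or_gt R ‖ξ‖ with hξ | hξ
  · have : η * ‖ξ‖ ≤ ‖φ ξ‖ * ‖ξ‖ := mul_le_mul_of_nonneg_right (hR hξ) (norm_nonneg ξ)
    nlinarith [le_max_right R 0]
  · have : η * ‖ξ‖ ≤ η * max R 0 := mul_le_mul_of_nonneg_left (hξ.le.trans (le_max_left R 0)) hη
    nlinarith [norm_nonneg ξ, norm_nonneg (φ ξ)]

theorem stmt_15_general {n : ℕ}
    (φ : EuclideanSpace ℝ (Fin n) → EuclideanSpace ℝ (Fin n))
    (hφ : IsHomeomorph φ) (hφ0 : φ 0 = 0)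
    (A : EuclideanSpace ℝ (Fin n) → ℝ)
    (hA : ∀ ξ, ξ ≠ 0 → φ ξ = A ξ • ξ)
    (hApos : ∀ ξ, ξ ≠ 0 → 0 < A ξ) :
    (∀ ξ : EuclideanSpace ℝ (Fin n), ξ ≠ 0 → 0 < ⟪φ ξ, ξ⟫) ∧
    ∀ η : ℝ, 0 < η → ∃ M : ℝ, 0 < M ∧
      ∀ ξ : EuclideanSpace ℝ (Fin n), η * ‖ξ‖ - M ≤ ⟪φ ξ, ξ⟫ := by
  have hray : ∀ ξ, ⟪φ ξ, ξ⟫ = ‖φ ξ‖ * ‖ξ‖ := by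
    intro ξ
    rcases eq_or_ne ξ 0 with rfl | hξ
    · simp
    · rw [hA ξ hξ]
      exact real_inner_smul_self_left_eq_norm_mul_norm ξ (hApos ξ hξ).le
  refine ⟨fun ξ hξ => ?_, fun η hη => ?_⟩
  · have hφξ : φ ξ ≠ 0 := hφ0 ▸ hφ.injective.ne hξ
    rw [hray]
    exact mul_pos (norm_pos_iff.mpr hφξ) (norm_pos_iff.mpr hξ)
  · simpa only [hray] using
      exists_pos_mul_norm_sub_le_norm_mul_norm hφ.isClosedEmbedding.tendsto_cobounded hη.le

/-- Remark 3.1: a homeomorphism of the form `φ(ξ) = A(ξ)·ξ` with `A` positive and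
continuous satisfies the sign and coercivity conditions `(H_φ)`. -/
theorem stmt_15 {n : ℕ}
    (φ : EuclideanSpace ℝ (Fin n) → EuclideanSpace ℝ (Fin n))
    (hφ : IsHomeomorph φ) (hφ0 : φ 0 = 0)
    (A : EuclideanSpace ℝ (Fin n) → ℝ)
    (hA : ∀ ξ, ξ ≠ 0 → φ ξ = A ξ • ξ)
    (hApos : ∀ ξ, ξ ≠ 0 → 0 < A ξ)
    (hAcont : ContinuousOn A {0}ᶜ) :
    (∀ ξ : EuclideanSpace ℝ (Fin n), ξ ≠ 0 → 0 < ⟪φ ξ, ξ⟫) ∧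
    ∀ η : ℝ, 0 < η → ∃ M : ℝ, 0 < M ∧
      ∀ ξ : EuclideanSpace ℝ (Fin n), η * ‖ξ‖ - M ≤ ⟪φ ξ, ξ⟫ :=
  stmt_15_general φ hφ hφ0 A hA hApos
end
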